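/- Let C be a balanced strict monoidal category. Let U, V ∈ C have good left duals (i.e. left duals U*, V* such that the ribbon condition (U ⊗ θ_{U*}) ∘ b_U = (θ_U ⊗ U*) ∘ b_U holds, and likewise for V, and θ_{U*} = (θ_U)* , θ_{V*} = (θ_V)*). Equip U⊗V with the left dual V*⊗U* via b_{U⊗V} = (U ⊗ b_V ⊗ U*) ∘ b_U and d_{U⊗V} = d_U ∘ (U* ⊗ d_V ⊗ U) (suitably bracketed). Then V*⊗U* is a good left dual of U⊗V: θ_{V*⊗U*} = (θ_{U⊗V})*. -/

import Mathlib

open CategoryTheory MonoidalCategory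

/-- The transpose (mate) of an endomorphism `f : X ⟶ X` with respect to a left
dual pairing `b : 𝟙 ⟶ X ⊗ Y`, `d : Y ⊗ X ⟶ 𝟙`. -/
noncomputable def mateEndo {C : Type*} [Category C] [MonoidalCategory C] {X Y : C}
    (b : 𝟙_ C ⟶ X ⊗ Y) (d : Y ⊗ X ⟶ 𝟙_ C) (f : X ⟶ X) : Y ⟶ Y :=
  (ρ_ Y).inv ≫ (Y ◁ b) ≫ (Y ◁ (f ▷ Y)) ≫ (α_ Y X Y).inv ≫ (d ▷ Y) ≫ (λ_ Y).hom

/-! A ribbon condition `b ≫ f ▷ Y = b ≫ X ◁ g` on a coevaluation `b` already forces `g` to be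
the mate of `f`: composing with the triangle identity on the dual side slides `g` out of the
zigzag. So it suffices to push `θ_{U⊗V} = (θ_U ⊗ θ_V) ≫ c_{U,V} ≫ c_{V,U}` across the nested
coevaluation of `U ⊗ V`. The twists cross it by the ribbon conditions of `U` and `V`, and a braiding
`c_{U,V}` crosses it as `c_{U*,V*}` (the transpose of a braiding is the braiding of the duals).
What comes out is `c_{V*,U*} ≫ c_{U*,V*} ≫ (θ_{V*} ⊗ θ_{U*})`, which is `θ_{V*⊗U*}` by
naturality of the braiding and the balancing axiom. -/

section Pairing

variable {C : Type*} [Category C] [MonoidalCategory C]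

lemma eq_mateEndo_of_coev_whiskerRight_eq {X Y : C} {b : 𝟙_ C ⟶ X ⊗ Y} {d : Y ⊗ X ⟶ 𝟙_ C}
    (tri : (ρ_ Y).inv ≫ (Y ◁ b) ≫ (α_ Y X Y).inv ≫ (d ▷ Y) ≫ (λ_ Y).hom = 𝟙 Y)
    {f : X ⟶ X} {g : Y ⟶ Y} (h : b ≫ f ▷ Y = b ≫ X ◁ g) :
    g = mateEndo b d f := by
  calc g = ((ρ_ Y).inv ≫ (Y ◁ b) ≫ (α_ Y X Y).inv ≫ (d ▷ Y) ≫ (λ_ Y).hom) ≫ g := by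
        rw [tri, Category.id_comp]
    _ = (ρ_ Y).inv ≫ Y ◁ (b ≫ X ◁ g) ≫ (α_ Y X Y).inv ≫ d ▷ Y ≫ (λ_ Y).hom := by
        simp only [whiskerLeft_comp, Category.assoc, associator_inv_naturality_right_assoc,
          whisker_exchange_assoc, id_whiskerLeft, Iso.inv_hom_id, Category.comp_id]
    _ = mateEndo b d f := by rw [← h, mateEndo, whiskerLeft_comp, Category.assoc]

lemma coev_whiskerRight_comp {X₁ X₂ X₃ Y₁ Y₂ Y₃ : C} {b₁ : 𝟙_ C ⟶ X₁ ⊗ Y₁}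
    {b₂ : 𝟙_ C ⟶ X₂ ⊗ Y₂} {b₃ : 𝟙_ C ⟶ X₃ ⊗ Y₃} {f₁ : X₁ ⟶ X₂} {f₂ : X₂ ⟶ X₃}
    {g₁ : Y₂ ⟶ Y₁} {g₂ : Y₃ ⟶ Y₂} (h₁ : b₁ ≫ f₁ ▷ Y₁ = b₂ ≫ X₂ ◁ g₁)
    (h₂ : b₂ ≫ f₂ ▷ Y₂ = b₃ ≫ X₃ ◁ g₂) :
    b₁ ≫ (f₁ ≫ f₂) ▷ Y₁ = b₃ ≫ X₃ ◁ (g₂ ≫ g₁) := by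
  rw [comp_whiskerRight, reassoc_of% h₁, whisker_exchange, reassoc_of% h₂, whiskerLeft_comp]

variable {U Ud V Vd : C}

def tensorCoev (bU : 𝟙_ C ⟶ U ⊗ Ud) (bV : 𝟙_ C ⟶ V ⊗ Vd) : 𝟙_ C ⟶ (U ⊗ V) ⊗ (Vd ⊗ Ud) :=
  bU ≫ (U ◁ ((λ_ Ud).inv ≫ (bV ▷ Ud))) ≫ (U ◁ (α_ V Vd Ud).hom) ≫ (α_ U V (Vd ⊗ Ud)).inv

def tensorEv (dU : Ud ⊗ U ⟶ 𝟙_ C) (dV : Vd ⊗ V ⟶ 𝟙_ C) : (Vd ⊗ Ud) ⊗ (U ⊗ V) ⟶ 𝟙_ C :=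
  (α_ Vd Ud (U ⊗ V)).hom ≫ (Vd ◁ (α_ Ud U V).inv) ≫ (Vd ◁ (dU ▷ V)) ≫ (Vd ◁ (λ_ V).hom) ≫ dV

lemma tensorCoev_tensorEv_triangle {bU : 𝟙_ C ⟶ U ⊗ Ud} {dU : Ud ⊗ U ⟶ 𝟙_ C}
    {bV : 𝟙_ C ⟶ V ⊗ Vd} {dV : Vd ⊗ V ⟶ 𝟙_ C}
    (triU : (ρ_ Ud).inv ≫ (Ud ◁ bU) ≫ (α_ Ud U Ud).inv ≫ (dU ▷ Ud) ≫ (λ_ Ud).hom = 𝟙 Ud)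
    (triV : (ρ_ Vd).inv ≫ (Vd ◁ bV) ≫ (α_ Vd V Vd).inv ≫ (dV ▷ Vd) ≫ (λ_ Vd).hom = 𝟙 Vd) :
    (ρ_ (Vd ⊗ Ud)).inv ≫ ((Vd ⊗ Ud) ◁ tensorCoev bU bV) ≫ (α_ (Vd ⊗ Ud) (U ⊗ V) (Vd ⊗ Ud)).inv ≫
      (tensorEv dU dV ▷ (Vd ⊗ Ud)) ≫ (λ_ (Vd ⊗ Ud)).hom = 𝟙 (Vd ⊗ Ud) := by
  calc
    _ = 𝟙 _ ⊗≫ Vd ◁ Ud ◁ bU ⊗≫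
        Vd ◁ ((Ud ⊗ U) ◁ ((λ_ Ud).inv ≫ bV ▷ Ud) ≫ dU ▷ ((V ⊗ Vd) ⊗ Ud)) ⊗≫
        dV ▷ (Vd ⊗ Ud) ⊗≫ 𝟙 _ := by simp only [tensorCoev, tensorEv]; monoidal
    _ = 𝟙 _ ⊗≫ Vd ◁ ((ρ_ Ud).inv ≫ Ud ◁ bU ≫ (α_ Ud U Ud).inv ≫ dU ▷ Ud ≫ (λ_ Ud).hom) ⊗≫
        ((ρ_ Vd).inv ≫ Vd ◁ bV ≫ (α_ Vd V Vd).inv ≫ dV ▷ Vd ≫ (λ_ Vd).hom) ▷ Ud ⊗≫ 𝟙 _ := by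
      rw [whisker_exchange]; monoidal
    _ = 𝟙 (Vd ⊗ Ud) := by rw [triU, triV]; monoidal

variable {U' Ud' V' Vd' : C}

lemma tensorCoev_whiskerLeft_whiskerRight (bU : 𝟙_ C ⟶ U ⊗ Ud) {bV : 𝟙_ C ⟶ V ⊗ Vd}
    {bV' : 𝟙_ C ⟶ V' ⊗ Vd'} {fV : V ⟶ V'} {gV : Vd' ⟶ Vd}
    (hV : bV ≫ fV ▷ Vd = bV' ≫ V' ◁ gV) :
    tensorCoev bU bV ≫ (U ◁ fV) ▷ (Vd ⊗ Ud) = tensorCoev bU bV' ≫ (U ⊗ V') ◁ (gV ▷ Ud) := by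
  calc
    _ = 𝟙 _ ⊗≫ bU ⊗≫ U ◁ ((bV ≫ fV ▷ Vd) ▷ Ud) ⊗≫ 𝟙 _ := by simp only [tensorCoev]; monoidal
    _ = _ := by rw [hV, tensorCoev]; monoidal

lemma tensorCoev_whiskerRight_whiskerRight {bU : 𝟙_ C ⟶ U ⊗ Ud} {bU' : 𝟙_ C ⟶ U' ⊗ Ud'}
    (bV : 𝟙_ C ⟶ V ⊗ Vd) {fU : U ⟶ U'} {gU : Ud' ⟶ Ud}
    (hU : bU ≫ fU ▷ Ud = bU' ≫ U' ◁ gU) :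
    tensorCoev bU bV ≫ (fU ▷ V) ▷ (Vd ⊗ Ud) = tensorCoev bU' bV ≫ (U' ⊗ V) ◁ (Vd ◁ gU) := by
  calc
    _ = 𝟙 _ ⊗≫ bU ⊗≫ (U ◁ ((λ_ Ud).inv ≫ bV ▷ Ud) ≫ fU ▷ ((V ⊗ Vd) ⊗ Ud)) ⊗≫ 𝟙 _ := by
        simp only [tensorCoev]; monoidal
    _ = 𝟙 _ ⊗≫ (bU ≫ fU ▷ Ud) ⊗≫ U' ◁ (bV ▷ Ud) ⊗≫ 𝟙 _ := by
        rw [whisker_exchange]; monoidal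
    _ = 𝟙 _ ⊗≫ bU' ⊗≫ U' ◁ (𝟙_ C ◁ gU ≫ bV ▷ Ud) ⊗≫ 𝟙 _ := by rw [hU]; monoidal
    _ = _ := by rw [whisker_exchange, tensorCoev]; monoidal

lemma tensorCoev_tensorHom_whiskerRight {bU : 𝟙_ C ⟶ U ⊗ Ud} {bU' : 𝟙_ C ⟶ U' ⊗ Ud'}
    {bV : 𝟙_ C ⟶ V ⊗ Vd} {bV' : 𝟙_ C ⟶ V' ⊗ Vd'} {fU : U ⟶ U'} {gU : Ud' ⟶ Ud}
    {fV : V ⟶ V'} {gV : Vd' ⟶ Vd}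
    (hU : bU ≫ fU ▷ Ud = bU' ≫ U' ◁ gU) (hV : bV ≫ fV ▷ Vd = bV' ≫ V' ◁ gV) :
    tensorCoev bU bV ≫ (fU ⊗ₘ fV) ▷ (Vd ⊗ Ud) =
      tensorCoev bU' bV' ≫ (U' ⊗ V') ◁ (gV ⊗ₘ gU) := by
  rw [tensorHom_def', tensorHom_def']
  exact coev_whiskerRight_comp (tensorCoev_whiskerLeft_whiskerRight bU hV)
    (tensorCoev_whiskerRight_whiskerRight bV' hU)

end Pairing

section Braided

open BraidedCategory

variable {C : Type*} [Category C] [MonoidalCategory C] [BraidedCategory C] {U Ud V Vd : C}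

lemma tensorCoev_braiding_whiskerRight (bU : 𝟙_ C ⟶ U ⊗ Ud) (bV : 𝟙_ C ⟶ V ⊗ Vd) :
    tensorCoev bU bV ≫ (β_ U V).hom ▷ (Vd ⊗ Ud) =
      tensorCoev bV bU ≫ (V ⊗ U) ◁ (β_ Ud Vd).hom := by
  calc
    _ = 𝟙 _ ⊗≫ bU ⊗≫ (U ◁ bV) ▷ Ud ⊗≫ ((β_ U V).hom ▷ Vd) ▷ Ud ⊗≫
        (V ◁ ((β_ U Vd).hom ≫ (β_ U Vd).inv)) ▷ Ud ⊗≫ 𝟙 _ := by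
        rw [Iso.hom_inv_id, tensorCoev]; monoidal
    _ = 𝟙 _ ⊗≫ bU ⊗≫ (U ◁ bV ≫ (β_ U (V ⊗ Vd)).hom) ▷ Ud ⊗≫
        (V ◁ (β_ U Vd).inv) ▷ Ud ⊗≫ 𝟙 _ := by rw [braiding_tensor_right_hom]; monoidal
    _ = 𝟙 _ ⊗≫ (𝟙_ C ◁ bU ≫ bV ▷ (U ⊗ Ud)) ⊗≫ (V ◁ (β_ U Vd).inv) ▷ Ud ⊗≫ 𝟙 _ := by
        rw [braiding_naturality_right, braiding_tensorUnit_right]; monoidal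
    _ = 𝟙 _ ⊗≫ bV ⊗≫ V ◁ (Vd ◁ bU) ⊗≫ V ◁ ((β_ U Vd).inv ▷ Ud) ⊗≫
        V ◁ (U ◁ ((β_ Ud Vd).inv ≫ (β_ Ud Vd).hom)) ⊗≫ 𝟙 _ := by
        rw [whisker_exchange, Iso.inv_hom_id]; monoidal
    _ = 𝟙 _ ⊗≫ bV ⊗≫ V ◁ (Vd ◁ bU ≫ (β_ (U ⊗ Ud) Vd).inv) ⊗≫ V ◁ (U ◁ (β_ Ud Vd).hom) ⊗≫
        𝟙 _ := by rw [braiding_tensor_left_inv]; monoidal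
    _ = _ := by
        rw [braiding_inv_naturality_right, braiding_inv_tensorUnit_left, tensorCoev]; monoidal

end Braided

theorem tensor_good_dual {C : Type*} [Category C] [MonoidalCategory C]
    [BraidedCategory C]
    (θ : ∀ X : C, X ⟶ X)
    (θbal : ∀ X Y : C, θ (X ⊗ Y) = (θ X ⊗ₘ θ Y) ≫ (β_ X Y).hom ≫ (β_ Y X).hom)
    (U Ud V Vd : C)
    (bU : 𝟙_ C ⟶ U ⊗ Ud) (dU : Ud ⊗ U ⟶ 𝟙_ C)
    (bV : 𝟙_ C ⟶ V ⊗ Vd) (dV : Vd ⊗ V ⟶ 𝟙_ C)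
    (triU₂ : (ρ_ Ud).inv ≫ (Ud ◁ bU) ≫ (α_ Ud U Ud).inv ≫ (dU ▷ Ud) ≫ (λ_ Ud).hom = 𝟙 Ud)
    (triV₂ : (ρ_ Vd).inv ≫ (Vd ◁ bV) ≫ (α_ Vd V Vd).inv ≫ (dV ▷ Vd) ≫ (λ_ Vd).hom = 𝟙 Vd)
    (ribbonU : bU ≫ (U ◁ θ Ud) = bU ≫ (θ U ▷ Ud))
    (ribbonV : bV ≫ (V ◁ θ Vd) = bV ≫ (θ V ▷ Vd)) :
    let bUV : 𝟙_ C ⟶ (U ⊗ V) ⊗ (Vd ⊗ Ud) :=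
      bU ≫ (U ◁ ((λ_ Ud).inv ≫ (bV ▷ Ud))) ≫ (U ◁ (α_ V Vd Ud).hom) ≫
        (α_ U V (Vd ⊗ Ud)).inv
    let dUV : (Vd ⊗ Ud) ⊗ (U ⊗ V) ⟶ 𝟙_ C :=
      (α_ Vd Ud (U ⊗ V)).hom ≫ (Vd ◁ (α_ Ud U V).inv) ≫
        (Vd ◁ (dU ▷ V)) ≫ (Vd ◁ (λ_ V).hom) ≫ dV
    θ (Vd ⊗ Ud) = mateEndo bUV dUV (θ (U ⊗ V)) := by
  have hθ : θ (Vd ⊗ Ud) = ((β_ Vd Ud).hom ≫ (β_ Ud Vd).hom) ≫ (θ Vd ⊗ₘ θ Ud) := by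
    rw [θbal, Category.assoc, BraidedCategory.braiding_naturality_assoc,
      BraidedCategory.braiding_naturality]
  have hribbon : tensorCoev bU bV ≫ θ (U ⊗ V) ▷ (Vd ⊗ Ud) =
      tensorCoev bU bV ≫ (U ⊗ V) ◁ θ (Vd ⊗ Ud) := by
    rw [θbal, hθ]
    exact coev_whiskerRight_comp
      (tensorCoev_tensorHom_whiskerRight ribbonU.symm ribbonV.symm)
      (coev_whiskerRight_comp (tensorCoev_braiding_whiskerRight bU bV)
        (tensorCoev_braiding_whiskerRight bV bU))
  exact eq_mateEndo_of_coev_whiskerRight_eq (tensorCoev_tensorEv_triangle triU₂ triV₂) hribbon
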